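/- arXiv:2103.14067 — 6 statements merged into one kernel-verified Lean document; each statement's English description precedes it below -/
import Mathlib

section
/- There exists a purchase decision tree (a single tree, |F| = 1, with 3 products) for which the polyhedron defined by the LeafMIO relaxation constraints has an extreme point (x, y) with x not in {0,1}³. Specifically, for the depth-2 tree with root split on product 1, left child split on product 2 with leaves y₁, y₂, and right child split on product 3 with leaves y₃, y₄, the point x = (0.5, 0.5, 0), y = (0.5, 0.5, 0, 0) is an extreme point of the polyhedron {(x,y) : y₁ ≤ x₁, y₁ ≤ x₂, y₂ ≤ x₁, y₂ ≤ 1−x₂, y₃ ≤ 1−x₁, y₃ ≤ x₃, y₄ ≤ 1−x₁, y₄ ≤ 1−x₃, y₁+y₂+y₃+y₄ = 1, 0 ≤ x ≤ 1, y ≥ 0}. -/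
/-- The LeafMIO LO-relaxation polyhedron for the depth-2 tree with root split on product 1,
left-child split on product 2 (leaves `y 0, y 1`) and right-child split on product 3
(leaves `y 2, y 3`). -/
def leafMIOPoly : Set ((Fin 3 → ℝ) × (Fin 4 → ℝ)) :=
  {p | p.2 0 ≤ p.1 0 ∧ p.2 0 ≤ p.1 1 ∧
       p.2 1 ≤ p.1 0 ∧ p.2 1 ≤ 1 - p.1 1 ∧
       p.2 2 ≤ 1 - p.1 0 ∧ p.2 2 ≤ p.1 2 ∧
       p.2 3 ≤ 1 - p.1 0 ∧ p.2 3 ≤ 1 - p.1 2 ∧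
       p.2 0 + p.2 1 + p.2 2 + p.2 3 = 1 ∧
       (∀ i, 0 ≤ p.1 i ∧ p.1 i ≤ 1) ∧ (∀ ℓ, 0 ≤ p.2 ℓ)}

private lemma tight_aux {a b u v u' v' : ℝ} (ha : 0 < a) (hb : 0 < b)
    (hu : u ≤ u') (hv : v ≤ v') (h : a * u + b * v = a * u' + b * v') :
    u = u' ∧ v = v' := by
  constructor <;>
    nlinarith [mul_nonneg ha.le (sub_nonneg.2 hu), mul_nonneg hb.le (sub_nonneg.2 hv)]

/-- The point `x = (0.5, 0.5, 0)`, `y = (0.5, 0.5, 0, 0)` is an extreme point of the LeafMIO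
relaxation polyhedron for a single tree, and its `x`-part is not binary: hence the LeafMIO
relaxation can fail to be integral even for `|F| = 1`. -/
theorem leafMIO_not_integral :
    (((![0.5, 0.5, 0], ![0.5, 0.5, 0, 0]) : (Fin 3 → ℝ) × (Fin 4 → ℝ)) ∈
      Set.extremePoints ℝ leafMIOPoly) ∧
    ¬ (∀ i : Fin 3, (![0.5, 0.5, 0] : Fin 3 → ℝ) i = 0 ∨ (![0.5, 0.5, 0] : Fin 3 → ℝ) i = 1) := by
  constructor
  · constructor
    · refine ⟨?_, ?_, ?_, ?_, ?_, ?_, ?_, ?_, ?_, ?_, ?_⟩ <;>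
        first
          | (intro i; fin_cases i <;> norm_num)
          | norm_num [Matrix.cons_val_two, Matrix.cons_val_three, Matrix.vecHead, Matrix.vecTail]
    · rintro p hp q hq ⟨a, b, ha, hb, hab, hcomb⟩
      obtain ⟨hp1, hp2, hp3, hp4, hp5, hp6, hp7, hp8, hps, hpx, hpy⟩ := hp
      obtain ⟨hq1, hq2, hq3, hq4, hq5, hq6, hq7, hq8, hqs, hqx, hqy⟩ := hq
      have e1 : ∀ i : Fin 3, a * p.1 i + b * q.1 i = ![(0.5:ℝ), 0.5, 0] i := by
        intro i
        have := congrFun (congrArg Prod.fst hcomb) i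
        simpa using this
      have e2 : ∀ i : Fin 4, a * p.2 i + b * q.2 i = ![(0.5:ℝ), 0.5, 0, 0] i := by
        intro i
        have := congrFun (congrArg Prod.snd hcomb) i
        simpa using this
      have ex0 := e1 0; have ex1 := e1 1; have ex2 := e1 2
      have ey0 := e2 0; have ey1 := e2 1; have ey2 := e2 2; have ey3 := e2 3
      simp only [Matrix.cons_val_zero, Matrix.cons_val_one, Matrix.head_cons,
        Matrix.cons_val_two, Matrix.tail_cons, Matrix.cons_val_three] at ex0 ex1 ex2 ey0 ey1 ey2 ey3
      norm_num at ex0 ex1 ex2 ey0 ey1 ey2 ey3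
      -- x₂ = 0 for both
      have hxc : p.1 2 = 0 ∧ q.1 2 = 0 := by
        have := tight_aux ha hb (hpx 2).1 (hqx 2).1 (by linarith : a * 0 + b * 0 = a * p.1 2 + b * q.1 2)
        exact ⟨this.1.symm, this.2.symm⟩
      -- y₂ = 0 for both
      have hy2 : p.2 2 = 0 ∧ q.2 2 = 0 := by
        have := tight_aux ha hb (hpy 2) (hqy 2) (by linarith : a * 0 + b * 0 = a * p.2 2 + b * q.2 2)
        exact ⟨this.1.symm, this.2.symm⟩
      -- y₃ = 0 for both
      have hy3 : p.2 3 = 0 ∧ q.2 3 = 0 := by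
        have := tight_aux ha hb (hpy 3) (hqy 3) (by linarith : a * 0 + b * 0 = a * p.2 3 + b * q.2 3)
        exact ⟨this.1.symm, this.2.symm⟩
      -- tight: y₀ = x₀
      have t1 := tight_aux ha hb hp1 hq1 (by linarith : a * p.2 0 + b * q.2 0 = a * p.1 0 + b * q.1 0)
      -- tight: y₀ = x₁
      have t2 := tight_aux ha hb hp2 hq2 (by linarith : a * p.2 0 + b * q.2 0 = a * p.1 1 + b * q.1 1)
      -- tight: y₁ = x₀
      have t3 := tight_aux ha hb hp3 hq3 (by linarith : a * p.2 1 + b * q.2 1 = a * p.1 0 + b * q.1 0)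
      -- tight: y₁ = 1 - x₁
      have t4 := tight_aux ha hb hp4 hq4
        (by linarith : a * p.2 1 + b * q.2 1 = a * (1 - p.1 1) + b * (1 - q.1 1))
      obtain ⟨t1p, t1q⟩ := t1; obtain ⟨t2p, t2q⟩ := t2
      obtain ⟨t3p, t3q⟩ := t3; obtain ⟨t4p, t4q⟩ := t4
      obtain ⟨hxcp, hxcq⟩ := hxc; obtain ⟨hy2p, hy2q⟩ := hy2; obtain ⟨hy3p, hy3q⟩ := hy3
      refine (And.left : _ ∧ q = ((![0.5, 0.5, 0], ![0.5, 0.5, 0, 0]) : (Fin 3 → ℝ) × (Fin 4 → ℝ)) → _) ⟨?_, ?_⟩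
      · refine Prod.ext (funext fun i => ?_) (funext fun i => ?_) <;> fin_cases i <;>
          simp <;> norm_num <;> linarith
      · refine Prod.ext (funext fun i => ?_) (funext fun i => ?_) <;> fin_cases i <;>
          simp <;> norm_num <;> linarith
  · intro h
    have := h 1
    norm_num at this
end

section
/- For a single purchase decision tree in which every product appears in at most one split, the constraint matrix of the SplitMIO LO relaxation (rows corresponding to: the unit-sum constraint written as two inequalities, the left-split constraints Σ_{ℓ∈left(s)} y_ℓ − x_{v(s)} ≤ 0, the right-split constraints Σ_{ℓ∈right(s)} y_ℓ + x_{v(s)} ≤ 1, and the bounds x_i ≤ 1) is totally unimodular. -/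
/-- A finite binary tree: each internal (split) node carries a product label. -/
inductive BTree (α : Type) where
  | leaf : BTree α
  | node : α → BTree α → BTree α → BTree α

namespace BTree

variable {α : Type}

/-- Paths (from the root, `true` = left) to the leaves of the tree. -/
def leavesF : BTree α → Finset (List Bool)
  | .leaf => {[]}
  | .node _ l r => (l.leavesF.image (List.cons true)) ∪ (r.leavesF.image (List.cons false))

/-- Paths to the split (internal) nodes of the tree. -/
def splitsF : BTree α → Finset (List Bool)
  | .leaf => ∅
  | .node _ l r =>
      insert [] ((l.splitsF.image (List.cons true)) ∪ (r.splitsF.image (List.cons false)))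

/-- The label (split product) of the node at a given path, if it is a split node. -/
def label : BTree α → List Bool → Option α
  | .leaf, _ => none
  | .node a _ _, [] => some a
  | .node _ l _, true :: p => l.label p
  | .node _ _ r, false :: p => r.label p

/-- `left(s)`: the leaves reachable by taking the left branch at split `s`. -/
def leftLeaves (t : BTree α) (s : List Bool) : Finset (List Bool) :=
  t.leavesF.filter (fun ℓ => s ++ [true] <+: ℓ)

/-- `right(s)`: the leaves reachable by taking the right branch at split `s`. -/
def rightLeaves (t : BTree α) (s : List Bool) : Finset (List Bool) :=
  t.leavesF.filter (fun ℓ => s ++ [false] <+: ℓ)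

end BTree


namespace SplitTU

open Matrix BTree



/-- abbreviation for the target set -/
local notation "SRange" => Set.range (SignType.cast : SignType → ℝ)

lemma mem0 : (0 : ℝ) ∈ SRange := ⟨0, by simp⟩
lemma mem1 : (1 : ℝ) ∈ SRange := ⟨1, by simp⟩
lemma memneg1 : (-1 : ℝ) ∈ SRange := ⟨-1, by simp⟩

lemma mem_mul {a b : ℝ} (ha : a ∈ SRange) (hb : b ∈ SRange) : a * b ∈ SRange := by
  obtain ⟨x, rfl⟩ := ha; obtain ⟨y, rfl⟩ := hb
  exact ⟨x * y, by rw [SignType.coe_mul]⟩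

lemma mem_neg_one_pow (m : ℕ) : ((-1 : ℝ) ^ m) ∈ SRange := by
  rcases Nat.even_or_odd m with h | h
  · exact ⟨1, by rw [h.neg_one_pow]; simp⟩
  · exact ⟨-1, by rw [h.neg_one_pow]; simp⟩

lemma mem_prod {ι : Type*} (s : Finset ι) (v : ι → ℝ) (h : ∀ i ∈ s, v i ∈ SRange) :
    (∏ i ∈ s, v i) ∈ SRange := by
  classical
  induction s using Finset.induction with
  | empty => simpa using mem1
  | insert _ _ hx ih =>
      rw [Finset.prod_insert hx]
      exact mem_mul (h _ (Finset.mem_insert_self _ _))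
        (ih fun i hi => h i (Finset.mem_insert_of_mem hi))

/-- prefixes of a common list are comparable -/
lemma pref_comp {α : Type*} {l₁ l₂ l₃ : List α} (h₁ : l₁ <+: l₃) (h₂ : l₂ <+: l₃)
    (h : l₁.length ≤ l₂.length) : l₁ <+: l₂ := by
  obtain ⟨u, rfl⟩ := h₂
  have h1 := List.prefix_iff_eq_take.mp h₁
  rw [List.take_append, Nat.sub_eq_zero_of_le (by simpa using h),
    List.take_zero, List.append_nil] at h1
  exact h1 ▸ List.take_prefix _ _

/-- Laplace expansion along a column with a single possibly-nonzero entry. -/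
lemma det_single_col {k : ℕ} (M : Matrix (Fin (k + 1)) (Fin (k + 1)) ℝ) (i j : Fin (k + 1))
    (h : ∀ i', i' ≠ i → M i' j = 0) :
    M.det = (-1) ^ ((i : ℕ) + (j : ℕ)) * M i j *
      (M.submatrix i.succAbove j.succAbove).det := by
  rw [Matrix.det_succ_column M j, Fintype.sum_eq_single i]
  intro i' hi'
  rw [h i' hi']
  ring

/-- Laplace expansion along a row with a single possibly-nonzero entry. -/
lemma det_single_row {k : ℕ} (M : Matrix (Fin (k + 1)) (Fin (k + 1)) ℝ) (i j : Fin (k + 1))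
    (h : ∀ j', j' ≠ j → M i j' = 0) :
    M.det = (-1) ^ ((i : ℕ) + (j : ℕ)) * M i j *
      (M.submatrix i.succAbove j.succAbove).det := by
  rw [Matrix.det_succ_row M i, Fintype.sum_eq_single j]
  intro j' hj'
  rw [h j' hj']
  ring

/-- signed copies of rows of a TU matrix give a TU matrix -/
lemma tu_of_signed_rows {X Y C : Type*} {A : Matrix X C ℝ} (hA : A.IsTotallyUnimodular)
    (φ : Y → X) (ε : Y → ℝ) (hε : ∀ i, ε i = 1 ∨ ε i = -1) :
    (Matrix.of fun i j => ε i * A (φ i) j).IsTotallyUnimodular := by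
  rw [Matrix.isTotallyUnimodular_iff]
  intro k f g
  have he : (Matrix.of fun i j => ε i * A (φ i) j).submatrix f g
      = Matrix.of (fun p q => (ε ∘ f) p * (A.submatrix (φ ∘ f) g) p q) := rfl
  rw [he, Matrix.det_mul_column (ε ∘ f)]
  refine mem_mul (mem_prod _ _ fun i _ => ?_) ?_
  · rcases hε (f i) with h | h <;> rw [Function.comp_apply, h]
    exacts [mem1, memneg1]
  · exact (Matrix.isTotallyUnimodular_iff A).mp hA k (φ ∘ f) g


open BTree

variable {α : Type}

lemma label_mem_splits : ∀ (t : BTree α) (s : List Bool) (v : α),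
    t.label s = some v → s ∈ t.splitsF := by
  intro t
  induction t with
  | leaf => intro s v h; simp [BTree.label] at h
  | node a l r ihl ihr =>
      intro s v h
      match s with
      | [] => simp [BTree.splitsF]
      | true :: p =>
          rw [BTree.label] at h
          rw [BTree.splitsF]
          exact Finset.mem_insert_of_mem (Finset.mem_union_left _
            (Finset.mem_image_of_mem _ (ihl p v h)))
      | false :: p =>
          rw [BTree.label] at h
          rw [BTree.splitsF]
          exact Finset.mem_insert_of_mem (Finset.mem_union_right _
            (Finset.mem_image_of_mem _ (ihr p v h)))

lemma split_not_leaf : ∀ (t : BTree α) (s : List Bool),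
    s ∈ t.splitsF → s ∉ t.leavesF := by
  intro t
  induction t with
  | leaf => intro s hs; simp [BTree.splitsF] at hs
  | node a l r ihl ihr =>
      intro s hs hl
      rw [BTree.splitsF] at hs
      rw [BTree.leavesF] at hl
      rcases Finset.mem_insert.mp hs with rfl | hs
      · simp at hl
      · rcases Finset.mem_union.mp hs with h | h <;>
          obtain ⟨p, hp, rfl⟩ := Finset.mem_image.mp h
        · have hpl : p ∈ l.leavesF := by
            rcases Finset.mem_union.mp hl with h' | h' <;>
              obtain ⟨q, hq, hql⟩ := Finset.mem_image.mp h'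
            · injection hql with h1 h2; exact h2 ▸ hq
            · injection hql with h1 h2; exact absurd h1 (by simp)
          exact ihl p hp hpl
        · have hpr : p ∈ r.leavesF := by
            rcases Finset.mem_union.mp hl with h' | h' <;>
              obtain ⟨q, hq, hql⟩ := Finset.mem_image.mp h'
            · injection hql with h1 h2; exact absurd h1 (by simp)
            · injection hql with h1 h2; exact h2 ▸ hq
          exact ihr p hp hpr

/-- exclusive-branch identity at a split node -/
lemma split_branch {t : BTree α} {s ℓ : List Bool} (hs : s ∈ t.splitsF) (hl : ℓ ∈ t.leavesF) :
    (if s <+: ℓ then (1 : ℝ) else 0)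
      = (if s ++ [true] <+: ℓ then 1 else 0) + (if s ++ [false] <+: ℓ then 1 else 0) := by
  have hnb : ¬(s ++ [true] <+: ℓ ∧ s ++ [false] <+: ℓ) := by
    rintro ⟨hT, hF⟩
    have h1 := pref_comp hT hF (by simp)
    have h2 := h1.eq_of_length (by simp)
    simp at h2
  have himp : ∀ d : Bool, s ++ [d] <+: ℓ → s <+: ℓ :=
    fun d h => (List.prefix_append s [d]).trans h
  by_cases h : s <+: ℓ
  · obtain ⟨u, rfl⟩ := h
    match u with
    | [] =>
        rw [List.append_nil] at hl
        exact absurd hl (split_not_leaf t s hs)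
    | true :: u' =>
        have hT : s ++ [true] <+: s ++ true :: u' := ⟨u', by simp⟩
        rw [if_pos (himp true hT), if_pos hT, if_neg (fun hF => hnb ⟨hT, hF⟩)]
        ring
    | false :: u' =>
        have hF : s ++ [false] <+: s ++ false :: u' := ⟨u', by simp⟩
        rw [if_pos (himp false hF), if_neg (fun hT => hnb ⟨hT, hF⟩), if_pos hF]
        ring
  · rw [if_neg h, if_neg (fun hT => h (himp true hT)), if_neg (fun hF => h (himp false hF))]
    ring

variable {n : ℕ}

/-- rows: `Sum.inl p` is the indicator of leaves below node `p`;
`Sum.inr (s, d)` is the row of the branch `d` of split `s` (`true` = left). -/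
def nmat (n : ℕ) (t : BTree (Fin n)) :
    Matrix (List Bool ⊕ List Bool × Bool) (Fin n ⊕ {ℓ // ℓ ∈ t.leavesF}) ℝ :=
  fun r c =>
    match r, c with
    | .inl _, .inl _ => 0
    | .inl p, .inr ℓ => if p <+: ℓ.1 then 1 else 0
    | .inr (s, d), .inl i =>
        if t.label s = some i then (if d then -1 else 1) else 0
    | .inr (s, d), .inr ℓ => if s ++ [d] <+: ℓ.1 then 1 else 0

/-- the node associated with a row -/
def nodeOf : List Bool ⊕ List Bool × Bool → List Bool :=
  Sum.elim id (fun sd => sd.1 ++ [sd.2])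

lemma nmat_inr (t : BTree (Fin n)) (r : List Bool ⊕ List Bool × Bool)
    (ℓ : {ℓ // ℓ ∈ t.leavesF}) :
    nmat n t r (Sum.inr ℓ) = if nodeOf r <+: ℓ.1 then 1 else 0 := by
  rcases r with p | ⟨s, d⟩ <;> rfl

lemma nmat_entry (t : BTree (Fin n)) (r : List Bool ⊕ List Bool × Bool)
    (c : Fin n ⊕ {ℓ // ℓ ∈ t.leavesF}) :
    nmat n t r c ∈ Set.range (SignType.cast : SignType → ℝ) := by
  rcases r with p | ⟨s, d⟩ <;> rcases c with i | ℓ <;> simp only [nmat] <;>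
    try rcases d with _ | _
  all_goals try split_ifs
  all_goals first | exact mem0 | exact mem1 | exact memneg1

lemma nmat_split_add {t : BTree (Fin n)} {s : List Bool} {v : Fin n}
    (hs : t.label s = some v) (c : Fin n ⊕ {ℓ // ℓ ∈ t.leavesF}) :
    nmat n t (Sum.inl s) c
      = nmat n t (Sum.inr (s, true)) c + nmat n t (Sum.inr (s, false)) c := by
  rcases c with i | ℓ
  · show (0 : ℝ) = (if t.label s = some i then (if true then (-1:ℝ) else 1) else 0)
      + (if t.label s = some i then (if false then (-1:ℝ) else 1) else 0)
    by_cases h : t.label s = some i <;> simp [h]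
  · exact split_branch (label_mem_splits t s v hs) ℓ.2

lemma nmat_TU (n : ℕ) (t : BTree (Fin n))
    (honce : ∀ s₁ ∈ t.splitsF, ∀ s₂ ∈ t.splitsF, t.label s₁ = t.label s₂ → s₁ = s₂) :
    (nmat n t).IsTotallyUnimodular := by
  rw [Matrix.isTotallyUnimodular_iff]
  intro k
  induction k with
  | zero => intro f g; exact ⟨1, by simp [Matrix.det_fin_zero]⟩
  | succ k ih =>
    intro f g
    set B := (nmat n t).submatrix f g with hB
    by_cases h1 : ∃ i i' : Fin (k + 1), i ≠ i' ∧ ∀ j, B i j = B i' j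
    · obtain ⟨i, i', hne, he⟩ := h1
      exact ⟨0, by rw [SignType.coe_zero]
                   exact (Matrix.det_zero_of_row_eq hne (funext he)).symm⟩
    by_cases h2 : ∃ j j' : Fin (k + 1), j ≠ j' ∧ ∀ i, B i j = B i j'
    · obtain ⟨j, j', hne, he⟩ := h2
      exact ⟨0, by rw [SignType.coe_zero]
                   exact (Matrix.det_zero_of_column_eq hne he).symm⟩
    by_cases h3 : ∃ j, ∀ i, B i j = 0
    · obtain ⟨j, hj⟩ := h3
      exact ⟨0, by rw [SignType.coe_zero]
                   exact (Matrix.det_eq_zero_of_column_eq_zero j hj).symm⟩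
    by_cases h4 : ∃ j i, B i j ≠ 0 ∧ ∀ i', B i' j ≠ 0 → i' = i
    · obtain ⟨j, i, _, huni⟩ := h4
      rw [det_single_col B i j (fun i' hi' => by_contra fun hnz => hi' (huni i' hnz))]
      refine mem_mul (mem_mul (mem_neg_one_pow _) ?_) ?_
      · simpa only [hB, Matrix.submatrix_apply] using nmat_entry t (f i) (g j)
      · rw [hB, Matrix.submatrix_submatrix]
        exact ih _ _
    push_neg at h3 h4
    by_cases h5 : ∃ j v, g j = Sum.inl v
    · obtain ⟨j, v, hgj⟩ := h5
      obtain ⟨i, hi⟩ := h3 j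
      obtain ⟨i', hi', hne⟩ := h4 j i hi
      have exS : ∀ i₀ : Fin (k + 1), B i₀ j ≠ 0 →
          ∃ s d, f i₀ = Sum.inr (s, d) ∧ t.label s = some v := by
        intro i₀ h₀
        have hBi : B i₀ j = nmat n t (f i₀) (Sum.inl v) := by
          rw [hB, Matrix.submatrix_apply, hgj]
        rcases hf : f i₀ with p | ⟨s, d⟩
        · rw [hf] at hBi
          exact absurd hBi h₀
        · refine ⟨s, d, rfl, ?_⟩
          by_contra hl
          apply h₀
          rw [hf] at hBi
          rw [hBi]
          show (if t.label s = some v then (if d then (-1 : ℝ) else 1) else 0) = 0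
          rw [if_neg hl]
      obtain ⟨s, d, hfi, hlab⟩ := exS i hi
      obtain ⟨s', d', hfi', hlab'⟩ := exS i' hi'
      have hss : s' = s := honce s' (label_mem_splits t s' v hlab') s
        (label_mem_splits t s v hlab) (hlab'.trans hlab.symm)
      rw [hss] at hfi' hlab'
      have hdd : d' ≠ d := by
        rintro rfl
        exact h1 ⟨i, i', hne.symm, fun j'' => by
          simp only [hB, Matrix.submatrix_apply]; rw [hfi, hfi']⟩
      have hadd : ∀ c, nmat n t (Sum.inr (s, d)) c + nmat n t (Sum.inr (s, d')) c
          = nmat n t (Sum.inl s) c := by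
        intro c
        rcases d with _ | _ <;> rcases d' with _ | _
        · exact absurd rfl hdd
        · rw [add_comm]; exact (nmat_split_add hlab c).symm
        · exact (nmat_split_add hlab c).symm
        · exact absurd rfl hdd
      set f' := Function.update f i (Sum.inl s) with hf'
      set B' := (nmat n t).submatrix f' g with hB'
      have hup : B.updateRow i (B i + (1 : ℝ) • B i') = B' := by
        ext a b
        by_cases hai : a = i
        · subst hai
          rw [Matrix.updateRow_self]
          simp only [Pi.add_apply, Pi.smul_apply, one_smul]
          show B a b + B i' b = nmat n t (f' a) (g b)
          simp only [hB, Matrix.submatrix_apply]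
          rw [hf', Function.update_self, hfi, hfi']
          exact hadd (g b)
        · rw [Matrix.updateRow_ne hai]
          show B a b = nmat n t (f' a) (g b)
          simp only [hB, Matrix.submatrix_apply]
          rw [hf', Function.update_of_ne hai]
      have hdet : B.det = B'.det := by
        rw [← hup]
        exact (Matrix.det_updateRow_add_smul_self B (Ne.symm hne) 1).symm
      have hzero : ∀ a, a ≠ i' → B' a j = 0 := by
        intro a ha
        by_cases hai : a = i
        · subst hai
          show nmat n t (f' a) (g j) = 0
          rw [hf', Function.update_self, hgj]
          rfl
        · show nmat n t (f' a) (g j) = 0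
          rw [hf', Function.update_of_ne hai, hgj]
          by_contra hnz
          have hBa : B a j ≠ 0 := by
            rw [hB, Matrix.submatrix_apply, hgj]
            exact hnz
          obtain ⟨s₂, d₂, hfa2, hlab₂⟩ := exS a hBa
          have hs2 : s₂ = s := honce s₂ (label_mem_splits t s₂ v hlab₂) s
            (label_mem_splits t s v hlab) (hlab₂.trans hlab.symm)
          rw [hs2] at hfa2
          have hcase : f a = f i ∨ f a = f i' := by
            rw [hfa2, hfi, hfi']
            rcases d₂ with _ | _ <;> rcases d with _ | _ <;> rcases d' with _ | _ <;>
              first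
                | exact Or.inl rfl
                | exact Or.inr rfl
                | exact absurd rfl hdd
          rcases hcase with h | h
          · exact h1 ⟨a, i, hai, fun j'' => by
              simp only [hB, Matrix.submatrix_apply]; rw [h]⟩
          · exact h1 ⟨a, i', ha, fun j'' => by
              simp only [hB, Matrix.submatrix_apply]; rw [h]⟩
      rw [hdet, det_single_col B' i' j hzero]
      refine mem_mul (mem_mul (mem_neg_one_pow _) ?_) ?_
      · simpa only [hB', Matrix.submatrix_apply] using nmat_entry t (f' i') (g j)
      · rw [hB', Matrix.submatrix_submatrix]
        exact ih _ _
    · have hgy : ∀ j : Fin (k + 1), ∃ ℓ, g j = Sum.inr ℓ := by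
        intro j
        rcases hg : g j with v | ℓ
        · exact absurd ⟨j, v, hg⟩ h5
        · exact ⟨ℓ, rfl⟩
      obtain ⟨i0, hmax⟩ := Finite.exists_max (fun i : Fin (k + 1) => (nodeOf (f i)).length)
      by_cases h6 : ∀ j, B i0 j = 0
      · exact ⟨0, by rw [SignType.coe_zero]
                     exact (Matrix.det_eq_zero_of_row_eq_zero i0 h6).symm⟩
      push_neg at h6
      obtain ⟨j0, hj0⟩ := h6
      obtain ⟨ℓ0, hgj0⟩ := hgy j0
      have hpre0 : nodeOf (f i0) <+: ℓ0.1 := by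
        by_contra hp
        apply hj0
        rw [hB, Matrix.submatrix_apply, hgj0, nmat_inr, if_neg hp]
      have hrow : ∀ j', j' ≠ j0 → B i0 j' = 0 := by
        intro j' hne'
        by_contra hnz
        obtain ⟨ℓ', hgj'⟩ := hgy j'
        have hpre' : nodeOf (f i0) <+: ℓ'.1 := by
          by_contra hp
          exact hnz (by rw [hB, Matrix.submatrix_apply, hgj', nmat_inr, if_neg hp])
        refine h2 ⟨j', j0, hne', fun a => ?_⟩
        rw [hB, Matrix.submatrix_apply, Matrix.submatrix_apply, hgj', hgj0, nmat_inr, nmat_inr]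
        have hiff : (nodeOf (f a) <+: ℓ'.1) ↔ (nodeOf (f a) <+: ℓ0.1) := by
          constructor
          · intro h
            exact (pref_comp h hpre' (hmax a)).trans hpre0
          · intro h
            exact (pref_comp h hpre0 (hmax a)).trans hpre'
        rw [if_congr hiff rfl rfl]
      rw [det_single_row B i0 j0 hrow]
      refine mem_mul (mem_mul (mem_neg_one_pow _) ?_) ?_
      · simpa only [hB, Matrix.submatrix_apply] using nmat_entry t (f i0) (g j0)
      · rw [hB, Matrix.submatrix_submatrix]
        exact ih _ _

end SplitTU

/-- The constraint matrix of the SplitMIO LO relaxation for a single tree `t` over products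
`Fin n`.  Rows: the unit-sum constraint written as two inequalities (`Sum.inl 0` and
`Sum.inl 1`), the left-split rows `∑_{ℓ ∈ left(s)} y_ℓ - x_{v(s)} ≤ 0`, the right-split rows
`∑_{ℓ ∈ right(s)} y_ℓ + x_{v(s)} ≤ 1`, and the bound rows `x_i ≤ 1`.  Columns: the `x`
variables (`Sum.inl`) and the `y` variables (`Sum.inr`). -/
def splitMIOMatrix (n : ℕ) (t : BTree (Fin n)) :
    Matrix (Fin 2 ⊕ ({s // s ∈ t.splitsF} ⊕ ({s // s ∈ t.splitsF} ⊕ Fin n)))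
      (Fin n ⊕ {ℓ // ℓ ∈ t.leavesF}) ℝ :=
  fun row col =>
    match row, col with
    | .inl k, .inr _ => if k = 0 then 1 else -1
    | .inl _, .inl _ => 0
    | .inr (.inl s), .inr ℓ => if ℓ.1 ∈ t.leftLeaves s.1 then 1 else 0
    | .inr (.inl s), .inl i => if t.label s.1 = some i then -1 else 0
    | .inr (.inr (.inl s)), .inr ℓ => if ℓ.1 ∈ t.rightLeaves s.1 then 1 else 0
    | .inr (.inr (.inl s)), .inl i => if t.label s.1 = some i then 1 else 0
    | .inr (.inr (.inr i)), .inl i' => if i = i' then 1 else 0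
    | .inr (.inr (.inr _)), .inr _ => 0

/-- For a single purchase decision tree in which every product appears in at most one split,
the constraint matrix of the SplitMIO LO relaxation is totally unimodular. -/
theorem splitMIO_matrix_totallyUnimodular (n : ℕ) (t : BTree (Fin n))
    (honce : ∀ s₁ ∈ t.splitsF, ∀ s₂ ∈ t.splitsF, t.label s₁ = t.label s₂ → s₁ = s₂) :
    (splitMIOMatrix n t).IsTotallyUnimodular := by
  classical
  have hN := SplitTU.nmat_TU n t honce
  set φ : (Fin 2 ⊕ ({s // s ∈ t.splitsF} ⊕ {s // s ∈ t.splitsF}))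
      → (List Bool ⊕ List Bool × Bool) :=
    Sum.elim (fun _ => Sum.inl ([] : List Bool))
      (Sum.elim (fun s => Sum.inr (s.1, true)) (fun s => Sum.inr (s.1, false))) with hφ
  set ε : (Fin 2 ⊕ ({s // s ∈ t.splitsF} ⊕ {s // s ∈ t.splitsF})) → ℝ :=
    Sum.elim (fun k => if k = 0 then (1 : ℝ) else -1) (fun _ => 1) with hε
  have hC : (Matrix.of fun i j => ε i * SplitTU.nmat n t (φ i) j).IsTotallyUnimodular := by
    refine SplitTU.tu_of_signed_rows hN φ ε ?_
    rintro (k | r)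
    · show (if k = 0 then (1 : ℝ) else -1) = 1 ∨ (if k = 0 then (1 : ℝ) else -1) = -1
      split_ifs <;> simp
    · exact Or.inl rfl
  set U : Matrix (Fin n) (Fin n ⊕ {ℓ // ℓ ∈ t.leavesF}) ℝ :=
    Matrix.of fun i c => if c = Sum.inl i then 1 else 0 with hU
  have hCU : (Matrix.fromRows (Matrix.of fun i j => ε i * SplitTU.nmat n t (φ i) j)
      U).IsTotallyUnimodular := by
    refine hC.fromRows_unitlike fun _ i => ⟨Sum.inl i, SignType.pos, funext fun c => ?_⟩
    show (if c = Sum.inl i then (1 : ℝ) else 0) = _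
    rw [Pi.single_apply]
    simp
  have heq : splitMIOMatrix n t
      = (Matrix.fromRows (Matrix.of fun i j => ε i * SplitTU.nmat n t (φ i) j) U).submatrix
        (Sum.elim (fun k => Sum.inl (Sum.inl k))
          (Sum.elim (fun s => Sum.inl (Sum.inr (Sum.inl s)))
            (Sum.elim (fun s => Sum.inl (Sum.inr (Sum.inr s))) (fun i => Sum.inr i)))) id := by
    ext r c
    rcases r with k | s | s | i <;> rcases c with i' | ℓ <;>
      simp [splitMIOMatrix, SplitTU.nmat, hε, hφ, hU, BTree.leftLeaves, BTree.rightLeaves,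
        Finset.mem_filter, List.nil_prefix] <;>
      first
        | (exact fun h => ℓ.2)
        | (exact if_congr ⟨fun a => a.symm, fun a => a.symm⟩ rfl rfl)
  rw [heq]
  exact hCU.submatrix _ _
end

section
/- Let x ∈ {0,1}ⁿ and let t be a purchase decision tree with leaf revenues r_{t,ℓ}. Let ℓ* be the unique leaf reached by following the tree with x (go left at split s iff x_{v(t,s)} = 1). Then the indicator vector y with y_{ℓ*} = 1 and y_ℓ = 0 otherwise is feasible for the SplitMIO subproblem {y ≥ 0 : Σ_ℓ y_ℓ = 1, Σ_{ℓ∈left(s)} y_ℓ ≤ x_{v(t,s)}, Σ_{ℓ∈right(s)} y_ℓ ≤ 1 − x_{v(t,s)} for all splits s}, and it is optimal for maximizing Σ_ℓ r_{t,ℓ} y_ℓ over this set. -/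
namespace BTree

/-- The leaf (path) reached by following the tree with binary assortment `x`
(go left at a split on product `a` iff `x a = true`). -/
def reach {α : Type} : BTree α → (α → Bool) → List Bool
  | .leaf, _ => []
  | .node a l r, x => if x a then true :: l.reach x else false :: r.reach x

end BTree

/-- The real value of `x` at an optional product: `1` if the product is in the assortment,
`0` otherwise. -/
def xOf {α : Type} (x : α → Bool) : Option α → ℝ
  | some a => if x a then 1 else 0
  | none => 0
namespace BTree

variable {α : Type}

theorem reach_mem_leavesF (t : BTree α) (x : α → Bool) : t.reach x ∈ t.leavesF := by
  induction t with
  | leaf => simp [reach, leavesF]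
  | node a l r ihl ihr =>
    simp only [reach, leavesF, Finset.mem_union, Finset.mem_image]
    by_cases h : x a
    · rw [if_pos h]; exact Or.inl ⟨_, ihl, rfl⟩
    · rw [if_neg h]; exact Or.inr ⟨_, ihr, rfl⟩

theorem sum_image_cons (s : Finset (List Bool)) (b : Bool) (f : List Bool → ℝ) :
    ∑ ℓ ∈ s.image (List.cons b), f ℓ = ∑ ℓ ∈ s, f (b :: ℓ) := by
  rw [Finset.sum_image]
  intro p _ q _ h
  simpa using h

theorem sum_leavesF_node (a : α) (l r : BTree α) (f : List Bool → ℝ) :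
    ∑ ℓ ∈ (BTree.node a l r).leavesF, f ℓ
      = (∑ ℓ ∈ l.leavesF, f (true :: ℓ)) + ∑ ℓ ∈ r.leavesF, f (false :: ℓ) := by
  rw [leavesF, Finset.sum_union, sum_image_cons, sum_image_cons]
  rw [Finset.disjoint_left]
  rintro ℓ hl hr
  simp only [Finset.mem_image] at hl hr
  obtain ⟨p, _, rfl⟩ := hl
  obtain ⟨q, _, h⟩ := hr
  simp at h

theorem filter_prefix_cons (a : α) (l r : BTree α) (b : Bool) (p : List Bool) :
    (BTree.node a l r).leavesF.filter (fun ℓ => (b :: p) <+: ℓ)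
      = ((if b then l.leavesF else r.leavesF).filter (fun ℓ => p <+: ℓ)).image
          (List.cons b) := by
  cases b
  · ext ℓ
    simp only [leavesF, if_false, Bool.false_eq_true, Finset.mem_filter, Finset.mem_union,
      Finset.mem_image]
    constructor
    · rintro ⟨h1 | h1, h2⟩ <;> obtain ⟨q, hq, rfl⟩ := h1
      · exact absurd (List.cons_prefix_cons.mp h2).1 (by simp)
      · exact ⟨q, ⟨hq, (List.cons_prefix_cons.mp h2).2⟩, rfl⟩
    · rintro ⟨q, ⟨hq, hpre⟩, rfl⟩
      exact ⟨Or.inr ⟨q, hq, rfl⟩, List.cons_prefix_cons.mpr ⟨rfl, hpre⟩⟩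
  · ext ℓ
    simp only [leavesF, if_true, Finset.mem_filter, Finset.mem_union, Finset.mem_image]
    constructor
    · rintro ⟨h1 | h1, h2⟩ <;> obtain ⟨q, hq, rfl⟩ := h1
      · exact ⟨q, ⟨hq, (List.cons_prefix_cons.mp h2).2⟩, rfl⟩
      · exact absurd (List.cons_prefix_cons.mp h2).1 (by simp)
    · rintro ⟨q, ⟨hq, hpre⟩, rfl⟩
      exact ⟨Or.inl ⟨q, hq, rfl⟩, List.cons_prefix_cons.mpr ⟨rfl, hpre⟩⟩

theorem leftLeaves_node_cons (a : α) (l r : BTree α) (b : Bool) (p : List Bool) :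
    (BTree.node a l r).leftLeaves (b :: p)
      = ((if b then l else r).leftLeaves p).image (List.cons b) := by
  have := filter_prefix_cons a l r b (p ++ [true])
  simp only [leftLeaves, List.cons_append]
  rw [this]
  cases b <;> simp

theorem rightLeaves_node_cons (a : α) (l r : BTree α) (b : Bool) (p : List Bool) :
    (BTree.node a l r).rightLeaves (b :: p)
      = ((if b then l else r).rightLeaves p).image (List.cons b) := by
  have := filter_prefix_cons a l r b (p ++ [false])
  simp only [rightLeaves, List.cons_append]
  rw [this]
  cases b <;> simp

theorem leftLeaves_node_nil (a : α) (l r : BTree α) :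
    (BTree.node a l r).leftLeaves [] = l.leavesF.image (List.cons true) := by
  have := filter_prefix_cons a l r true []
  simp only [leftLeaves, List.nil_append]
  rw [show ([true] : List Bool) = true :: [] from rfl, this]
  simp

theorem rightLeaves_node_nil (a : α) (l r : BTree α) :
    (BTree.node a l r).rightLeaves [] = r.leavesF.image (List.cons false) := by
  have := filter_prefix_cons a l r false []
  simp only [rightLeaves, List.nil_append]
  rw [show ([false] : List Bool) = false :: [] from rfl, this]
  simp

theorem xOf_nonneg (x : α → Bool) (o : Option α) : 0 ≤ xOf x o := by
  cases o <;> simp [xOf] <;> split <;> norm_num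

theorem xOf_le_one (x : α → Bool) (o : Option α) : xOf x o ≤ 1 := by
  cases o <;> simp [xOf] <;> split <;> norm_num

end BTree
namespace BTree

theorem sum_mul_ind (s : Finset (List Bool)) (c : List Bool) (hc : c ∈ s)
    (f : List Bool → ℝ) :
    ∑ ℓ ∈ s, f ℓ * (if ℓ = c then 1 else 0) = f c := by
  simp only [mul_ite, mul_one, mul_zero]
  rw [Finset.sum_ite_eq' s c f, if_pos hc]

variable {α : Type} [DecidableEq α]

theorem main (t : BTree α) (x : α → Bool) (r : List Bool → ℝ) :
    ((∀ ℓ, 0 ≤ (if ℓ = t.reach x then (1:ℝ) else 0)) ∧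
      (∑ ℓ ∈ t.leavesF, (if ℓ = t.reach x then (1:ℝ) else 0)) = 1 ∧
      (∀ s ∈ t.splitsF,
        (∑ ℓ ∈ t.leftLeaves s, (if ℓ = t.reach x then (1:ℝ) else 0) ≤ xOf x (t.label s)) ∧
        (∑ ℓ ∈ t.rightLeaves s, (if ℓ = t.reach x then (1:ℝ) else 0) ≤ 1 - xOf x (t.label s)))) ∧
    (∀ y' : List Bool → ℝ, (∀ ℓ, 0 ≤ y' ℓ) → (∑ ℓ ∈ t.leavesF, y' ℓ = 1) →
      (∀ s ∈ t.splitsF,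
        (∑ ℓ ∈ t.leftLeaves s, y' ℓ ≤ xOf x (t.label s)) ∧
        (∑ ℓ ∈ t.rightLeaves s, y' ℓ ≤ 1 - xOf x (t.label s))) →
      ∑ ℓ ∈ t.leavesF, r ℓ * y' ℓ ≤
        ∑ ℓ ∈ t.leavesF, r ℓ * (if ℓ = t.reach x then (1:ℝ) else 0)) := by
  induction t generalizing r with
  | leaf =>
    refine ⟨⟨fun ℓ => by split <;> norm_num, by simp [reach, leavesF],
      fun s hs => by simp [splitsF] at hs⟩, ?_⟩
    intro y' _ hsum _
    simp only [leavesF, reach, Finset.sum_singleton, if_pos rfl] at hsum ⊢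
    simp [hsum]
  | node a l rt ihl ihr =>
    by_cases hx : x a
    · -- go left
      have hreach : (BTree.node a l rt).reach x = true :: l.reach x := by
        simp [reach, hx]
      have hxa : xOf x ((BTree.node a l rt).label []) = 1 := by simp [label, xOf, hx]
      obtain ⟨⟨_, ihl_sum, ihl_split⟩, ihl_opt⟩ := ihl (fun p => r (true :: p))
      have hsum_ind : (∑ ℓ ∈ (BTree.node a l rt).leavesF,
          (if ℓ = (BTree.node a l rt).reach x then (1:ℝ) else 0)) = 1 := by
        rw [sum_leavesF_node, hreach]
        simp only [List.cons.injEq, Bool.false_eq_true, false_and, if_false, true_and,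
          Finset.sum_const_zero, add_zero]
        exact ihl_sum
      refine ⟨⟨fun ℓ => by split <;> norm_num, hsum_ind, ?_⟩, ?_⟩
      · -- split constraints for the indicator
        intro s hs
        rw [hreach]
        simp only [splitsF, Finset.mem_insert, Finset.mem_union, Finset.mem_image] at hs
        rcases hs with rfl | ⟨p, hp, rfl⟩ | ⟨p, hp, rfl⟩
        · rw [hxa, leftLeaves_node_nil, rightLeaves_node_nil, sum_image_cons, sum_image_cons]
          constructor
          · simp only [List.cons.injEq, true_and]
            rw [ihl_sum]
          · simp only [List.cons.injEq, Bool.false_eq_true, false_and, if_false,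
              Finset.sum_const_zero]
            norm_num
        · rw [leftLeaves_node_cons, rightLeaves_node_cons]
          simp only [if_true, sum_image_cons, List.cons.injEq, true_and]
          have : (BTree.node a l rt).label (true :: p) = l.label p := rfl
          rw [this]
          exact ihl_split p hp
        · rw [leftLeaves_node_cons, rightLeaves_node_cons]
          simp only [if_false, Bool.false_eq_true, sum_image_cons, List.cons.injEq,
            false_and, Finset.sum_const_zero]
          have : (BTree.node a l rt).label (false :: p) = rt.label p := rfl
          rw [this]
          constructor
          · exact xOf_nonneg x _
          · have := xOf_le_one x (rt.label p); linarith
      · -- optimality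
        intro y' hnn hsum hsplit
        have hroot := hsplit [] (by simp [splitsF])
        have hR : ∑ ℓ ∈ rt.leavesF, y' (false :: ℓ) ≤ 0 := by
          have h2 := hroot.2
          rw [rightLeaves_node_nil, sum_image_cons, hxa] at h2
          linarith
        have hz : ∀ ℓ ∈ rt.leavesF, y' (false :: ℓ) = 0 := by
          have hRz : ∑ ℓ ∈ rt.leavesF, y' (false :: ℓ) = 0 :=
            le_antisymm hR (Finset.sum_nonneg fun ℓ _ => hnn _)
          exact fun ℓ hℓ =>
            (Finset.sum_eq_zero_iff_of_nonneg (fun ℓ _ => hnn _)).mp hRz ℓ hℓ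
        have hL : ∑ ℓ ∈ l.leavesF, y' (true :: ℓ) = 1 := by
          rw [sum_leavesF_node] at hsum
          have : ∑ ℓ ∈ rt.leavesF, y' (false :: ℓ) = 0 := Finset.sum_eq_zero hz
          linarith
        have key := ihl_opt (fun p => y' (true :: p)) (fun p => hnn _) hL ?_
        · rw [sum_leavesF_node, sum_leavesF_node, hreach]
          simp only [List.cons.injEq, Bool.false_eq_true, false_and, if_false, true_and,
            mul_zero, Finset.sum_const_zero, add_zero]
          have h0 : ∑ ℓ ∈ rt.leavesF, r (false :: ℓ) * y' (false :: ℓ) = 0 :=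
            Finset.sum_eq_zero fun ℓ hℓ => by rw [hz ℓ hℓ, mul_zero]
          rw [h0, add_zero]
          exact key
        · intro p hp
          have hmem : (true :: p) ∈ (BTree.node a l rt).splitsF := by
            simp only [splitsF, Finset.mem_insert, Finset.mem_union, Finset.mem_image]
            exact Or.inr (Or.inl ⟨p, hp, rfl⟩)
          have := hsplit (true :: p) hmem
          rw [leftLeaves_node_cons, rightLeaves_node_cons] at this
          simp only [if_true, sum_image_cons] at this
          exact this
    · -- go right
      have hreach : (BTree.node a l rt).reach x = false :: rt.reach x := by
        simp [reach, hx]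
      have hxa : xOf x ((BTree.node a l rt).label []) = 0 := by simp [label, xOf, hx]
      obtain ⟨⟨_, ihr_sum, ihr_split⟩, ihr_opt⟩ := ihr (fun p => r (false :: p))
      have hsum_ind : (∑ ℓ ∈ (BTree.node a l rt).leavesF,
          (if ℓ = (BTree.node a l rt).reach x then (1:ℝ) else 0)) = 1 := by
        rw [sum_leavesF_node, hreach]
        simp only [List.cons.injEq, Bool.true_eq_false, false_and, if_false, true_and,
          Finset.sum_const_zero, zero_add]
        exact ihr_sum
      refine ⟨⟨fun ℓ => by split <;> norm_num, hsum_ind, ?_⟩, ?_⟩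
      · intro s hs
        rw [hreach]
        simp only [splitsF, Finset.mem_insert, Finset.mem_union, Finset.mem_image] at hs
        rcases hs with rfl | ⟨p, hp, rfl⟩ | ⟨p, hp, rfl⟩
        · rw [hxa, leftLeaves_node_nil, rightLeaves_node_nil, sum_image_cons, sum_image_cons]
          constructor
          · simp only [List.cons.injEq, Bool.true_eq_false, false_and, if_false,
              Finset.sum_const_zero]
            exact le_refl 0
          · simp only [List.cons.injEq, true_and]
            rw [ihr_sum]
            norm_num
        · rw [leftLeaves_node_cons, rightLeaves_node_cons]
          simp only [if_true, sum_image_cons, List.cons.injEq, Bool.true_eq_false,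
            false_and, if_false, Finset.sum_const_zero]
          have : (BTree.node a l rt).label (true :: p) = l.label p := rfl
          rw [this]
          constructor
          · exact xOf_nonneg x _
          · have := xOf_le_one x (l.label p); linarith
        · rw [leftLeaves_node_cons, rightLeaves_node_cons]
          simp only [if_false, Bool.false_eq_true, sum_image_cons, List.cons.injEq, true_and]
          have : (BTree.node a l rt).label (false :: p) = rt.label p := rfl
          rw [this]
          exact ihr_split p hp
      · intro y' hnn hsum hsplit
        have hroot := hsplit [] (by simp [splitsF])
        have hR : ∑ ℓ ∈ l.leavesF, y' (true :: ℓ) ≤ 0 := by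
          have h1 := hroot.1
          rw [leftLeaves_node_nil, sum_image_cons, hxa] at h1
          linarith
        have hz : ∀ ℓ ∈ l.leavesF, y' (true :: ℓ) = 0 := by
          have hRz : ∑ ℓ ∈ l.leavesF, y' (true :: ℓ) = 0 :=
            le_antisymm hR (Finset.sum_nonneg fun ℓ _ => hnn _)
          exact fun ℓ hℓ =>
            (Finset.sum_eq_zero_iff_of_nonneg (fun ℓ _ => hnn _)).mp hRz ℓ hℓ
        have hL : ∑ ℓ ∈ rt.leavesF, y' (false :: ℓ) = 1 := by
          rw [sum_leavesF_node] at hsum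
          have : ∑ ℓ ∈ l.leavesF, y' (true :: ℓ) = 0 := Finset.sum_eq_zero hz
          linarith
        have key := ihr_opt (fun p => y' (false :: p)) (fun p => hnn _) hL ?_
        · rw [sum_leavesF_node, sum_leavesF_node, hreach]
          simp only [List.cons.injEq, Bool.true_eq_false, false_and, if_false, true_and,
            mul_zero, Finset.sum_const_zero, zero_add]
          have h0 : ∑ ℓ ∈ l.leavesF, r (true :: ℓ) * y' (true :: ℓ) = 0 :=
            Finset.sum_eq_zero fun ℓ hℓ => by rw [hz ℓ hℓ, mul_zero]
          rw [h0, zero_add]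
          exact key
        · intro p hp
          have hmem : (false :: p) ∈ (BTree.node a l rt).splitsF := by
            simp only [splitsF, Finset.mem_insert, Finset.mem_union, Finset.mem_image]
            exact Or.inr (Or.inr ⟨p, hp, rfl⟩)
          have := hsplit (false :: p) hmem
          rw [leftLeaves_node_cons, rightLeaves_node_cons] at this
          simp only [if_false, Bool.false_eq_true, sum_image_cons] at this
          exact this

end BTree

/-- For binary `x`, the indicator vector of the leaf `ℓ* = reach t x` is feasible for the
SplitMIO subproblem of tree `t`, and it is optimal for maximizing `∑_ℓ r_ℓ y_ℓ` over that
feasible region. -/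
theorem splitMIO_subproblem_binary_indicator_optimal {α : Type} [DecidableEq α]
    (t : BTree α) (x : α → Bool) (r : List Bool → ℝ) :
    let y : List Bool → ℝ := fun ℓ => if ℓ = t.reach x then 1 else 0
    ((∀ ℓ, 0 ≤ y ℓ) ∧ (∑ ℓ ∈ t.leavesF, y ℓ = 1) ∧
      (∀ s ∈ t.splitsF,
        (∑ ℓ ∈ t.leftLeaves s, y ℓ ≤ xOf x (t.label s)) ∧
        (∑ ℓ ∈ t.rightLeaves s, y ℓ ≤ 1 - xOf x (t.label s)))) ∧
    (∀ y' : List Bool → ℝ, (∀ ℓ, 0 ≤ y' ℓ) → (∑ ℓ ∈ t.leavesF, y' ℓ = 1) →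
      (∀ s ∈ t.splitsF,
        (∑ ℓ ∈ t.leftLeaves s, y' ℓ ≤ xOf x (t.label s)) ∧
        (∑ ℓ ∈ t.rightLeaves s, y' ℓ ≤ 1 - xOf x (t.label s))) →
      ∑ ℓ ∈ t.leavesF, r ℓ * y' ℓ ≤ ∑ ℓ ∈ t.leavesF, r ℓ * y ℓ) := by
  exact BTree.main t x r
end

section
/- Let x ∈ {0,1}ⁿ, let t be a purchase decision tree with leaf ℓ* reached by x, and define the dual solution α_{t,s} = max{0, max_{ℓ∈left(s)} r_{t,ℓ} − r_{t,ℓ*}} if s ∈ RS(ℓ*) and 0 otherwise; β_{t,s} = max{0, max_{ℓ∈right(s)} r_{t,ℓ} − r_{t,ℓ*}} if s ∈ LS(ℓ*) and 0 otherwise; γ_t = r_{t,ℓ*}. Then (α, β, γ) is feasible for the SplitMIO dual: for every leaf ℓ, Σ_{s: ℓ∈left(s)} α_{t,s} + Σ_{s: ℓ∈right(s)} β_{t,s} + γ_t ≥ r_{t,ℓ}, and α, β ≥ 0; moreover its dual objective Σ_s α_{t,s} x_{v(t,s)} + Σ_s β_{t,s}(1 − x_{v(t,s)}) + γ_t equals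 r_{t,ℓ*}. -/
section Aux

variable {α : Type}

lemma aux_reach_mem (t : BTree α) (x : α → Bool) : t.reach x ∈ t.leavesF := by
  induction t with
  | leaf => simp [BTree.reach, BTree.leavesF]
  | node a l r ihl ihr =>
    simp only [BTree.reach, BTree.leavesF, Finset.mem_union, Finset.mem_image]
    by_cases h : x a
    · exact Or.inl ⟨_, ihl, by simp [h]⟩
    · exact Or.inr ⟨_, ihr, by simp [h]⟩

lemma aux_prefix_split (t : BTree α) :
    ∀ ℓ ∈ t.leavesF, ∀ p b, p ++ [b] <+: ℓ → p ∈ t.splitsF := by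
  induction t with
  | leaf =>
    intro ℓ hℓ p b hp
    simp only [BTree.leavesF, Finset.mem_singleton] at hℓ
    subst hℓ
    simp [List.prefix_nil] at hp
  | node a l r ihl ihr =>
    intro ℓ hℓ p b hp
    simp only [BTree.leavesF, Finset.mem_union, Finset.mem_image] at hℓ
    simp only [BTree.splitsF, Finset.mem_insert, Finset.mem_union, Finset.mem_image]
    rcases hℓ with ⟨ℓ', hℓ', rfl⟩ | ⟨ℓ', hℓ', rfl⟩
    · match p with
      | [] => exact Or.inl rfl
      | c :: p' =>
        rw [List.cons_append, List.cons_prefix_cons] at hp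
        obtain ⟨rfl, hp'⟩ := hp
        exact Or.inr (Or.inl ⟨p', ihl ℓ' hℓ' p' b hp', rfl⟩)
    · match p with
      | [] => exact Or.inl rfl
      | c :: p' =>
        rw [List.cons_append, List.cons_prefix_cons] at hp
        obtain ⟨rfl, hp'⟩ := hp
        exact Or.inr (Or.inr ⟨p', ihr ℓ' hℓ' p' b hp', rfl⟩)

lemma aux_reach_label (t : BTree α) (x : α → Bool) :
    ∀ s b, s ++ [b] <+: t.reach x → ∃ a, t.label s = some a ∧ x a = b := by
  induction t with
  | leaf =>
    intro s b h
    simp [BTree.reach, List.prefix_nil] at h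
  | node a l r ihl ihr =>
    intro s b h
    by_cases hx : x a
    · simp only [BTree.reach, hx, if_true] at h
      match s with
      | [] =>
        rw [List.nil_append, List.cons_prefix_cons] at h
        exact ⟨a, rfl, by rw [hx, h.1]⟩
      | true :: s' =>
        rw [List.cons_append, List.cons_prefix_cons] at h
        exact ihl s' b h.2
      | false :: s' =>
        rw [List.cons_append, List.cons_prefix_cons] at h
        exact absurd h.1 (by simp)
    · simp only [BTree.reach, if_neg hx] at h
      match s with
      | [] =>
        rw [List.nil_append, List.cons_prefix_cons] at h
        refine ⟨a, rfl, ?_⟩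
        rw [h.1]
        simpa using hx
      | true :: s' =>
        rw [List.cons_append, List.cons_prefix_cons] at h
        exact absurd h.1 (by simp)
      | false :: s' =>
        rw [List.cons_append, List.cons_prefix_cons] at h
        exact ihr s' b h.2

lemma aux_diverge (t : BTree α) :
    ∀ ℓ₁ ∈ t.leavesF, ∀ ℓ₂ ∈ t.leavesF, ℓ₁ ≠ ℓ₂ →
      ∃ p, (p ++ [true] <+: ℓ₁ ∧ p ++ [false] <+: ℓ₂) ∨
           (p ++ [false] <+: ℓ₁ ∧ p ++ [true] <+: ℓ₂) := by
  induction t with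
  | leaf =>
    intro ℓ₁ h₁ ℓ₂ h₂ hne
    simp only [BTree.leavesF, Finset.mem_singleton] at h₁ h₂
    subst h₁; subst h₂; exact absurd rfl hne
  | node a l r ihl ihr =>
    intro ℓ₁ h₁ ℓ₂ h₂ hne
    simp only [BTree.leavesF, Finset.mem_union, Finset.mem_image] at h₁ h₂
    rcases h₁ with ⟨m₁, hm₁, rfl⟩ | ⟨m₁, hm₁, rfl⟩ <;>
      rcases h₂ with ⟨m₂, hm₂, rfl⟩ | ⟨m₂, hm₂, rfl⟩
    · have hne' : m₁ ≠ m₂ := fun h => hne (by rw [h])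
      obtain ⟨p, hp⟩ := ihl m₁ hm₁ m₂ hm₂ hne'
      refine ⟨true :: p, ?_⟩
      rcases hp with ⟨hpa, hpb⟩ | ⟨hpa, hpb⟩
      · exact Or.inl ⟨by simpa [List.cons_prefix_cons] using hpa,
          by simpa [List.cons_prefix_cons] using hpb⟩
      · exact Or.inr ⟨by simpa [List.cons_prefix_cons] using hpa,
          by simpa [List.cons_prefix_cons] using hpb⟩
    · exact ⟨[], Or.inl ⟨by simp [List.cons_prefix_cons], by simp [List.cons_prefix_cons]⟩⟩
    · exact ⟨[], Or.inr ⟨by simp [List.cons_prefix_cons], by simp [List.cons_prefix_cons]⟩⟩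
    · have hne' : m₁ ≠ m₂ := fun h => hne (by rw [h])
      obtain ⟨p, hp⟩ := ihr m₁ hm₁ m₂ hm₂ hne'
      refine ⟨false :: p, ?_⟩
      rcases hp with ⟨hpa, hpb⟩ | ⟨hpa, hpb⟩
      · exact Or.inl ⟨by simpa [List.cons_prefix_cons] using hpa,
          by simpa [List.cons_prefix_cons] using hpb⟩
      · exact Or.inr ⟨by simpa [List.cons_prefix_cons] using hpa,
          by simpa [List.cons_prefix_cons] using hpb⟩

end Aux

/-- For binary `x` and reached leaf `ℓ* = reach t x`, the closed-form dual solution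
`α_s = max{0, max_{ℓ∈left(s)} r_ℓ - r_{ℓ*}}` for `s ∈ RS(ℓ*)` (else `0`),
`β_s = max{0, max_{ℓ∈right(s)} r_ℓ - r_{ℓ*}}` for `s ∈ LS(ℓ*)` (else `0`), `γ = r_{ℓ*}`
is feasible for the SplitMIO dual subproblem, and its dual objective equals `r_{ℓ*}`.
(Here `max{0, max_{ℓ∈A} c_ℓ}` is expressed as `A.fold max 0 c`.) -/
theorem splitMIO_dual_binary_closed_form {α : Type} [DecidableEq α]
    (t : BTree α) (x : α → Bool) (r : List Bool → ℝ) :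
    let L := t.reach x
    let αd : List Bool → ℝ := fun s =>
      if L ∈ t.rightLeaves s then (t.leftLeaves s).fold max 0 (fun ℓ => r ℓ - r L) else 0
    let βd : List Bool → ℝ := fun s =>
      if L ∈ t.leftLeaves s then (t.rightLeaves s).fold max 0 (fun ℓ => r ℓ - r L) else 0
    let γ : ℝ := r L
    ((∀ s, 0 ≤ αd s) ∧ (∀ s, 0 ≤ βd s) ∧
      (∀ ℓ ∈ t.leavesF,
        (∑ s ∈ t.splitsF.filter (fun s => ℓ ∈ t.leftLeaves s), αd s) +
        (∑ s ∈ t.splitsF.filter (fun s => ℓ ∈ t.rightLeaves s), βd s) + γ ≥ r ℓ)) ∧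
    ((∑ s ∈ t.splitsF, αd s * xOf x (t.label s)) +
      (∑ s ∈ t.splitsF, βd s * (1 - xOf x (t.label s))) + γ = r L) := by
  intro L αd βd γ
  have hL : L ∈ t.leavesF := aux_reach_mem t x
  have hα0 : ∀ s, 0 ≤ αd s := by
    intro s
    simp only [αd]
    split
    · exact (Finset.le_fold_max _).mpr (Or.inl le_rfl)
    · exact le_rfl
  have hβ0 : ∀ s, 0 ≤ βd s := by
    intro s
    simp only [βd]
    split
    · exact (Finset.le_fold_max _).mpr (Or.inl le_rfl)
    · exact le_rfl
  refine ⟨⟨hα0, hβ0, ?_⟩, ?_⟩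
  · -- feasibility
    intro ℓ hℓ
    have hs1 : 0 ≤ ∑ s ∈ t.splitsF.filter (fun s => ℓ ∈ t.leftLeaves s), αd s :=
      Finset.sum_nonneg fun s _ => hα0 s
    have hs2 : 0 ≤ ∑ s ∈ t.splitsF.filter (fun s => ℓ ∈ t.rightLeaves s), βd s :=
      Finset.sum_nonneg fun s _ => hβ0 s
    by_cases hq : ℓ = L
    · subst hq
      simp only [γ, ge_iff_le]
      linarith
    · obtain ⟨p, hp⟩ := aux_diverge t L hL ℓ hℓ (Ne.symm hq)
      rcases hp with ⟨hpL, hpℓ⟩ | ⟨hpL, hpℓ⟩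
      · -- L left at p, ℓ right at p : use β
        have hpsplit : p ∈ t.splitsF := aux_prefix_split t ℓ hℓ p false hpℓ
        have hLleft : L ∈ t.leftLeaves p := Finset.mem_filter.mpr ⟨hL, hpL⟩
        have hℓright : ℓ ∈ t.rightLeaves p := Finset.mem_filter.mpr ⟨hℓ, hpℓ⟩
        have hβp : r ℓ - r L ≤ βd p := by
          simp only [βd, if_pos hLleft]
          exact (Finset.le_fold_max _).mpr (Or.inr ⟨ℓ, hℓright, le_rfl⟩)
        have hsum : βd p ≤ ∑ s ∈ t.splitsF.filter (fun s => ℓ ∈ t.rightLeaves s), βd s :=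
          Finset.single_le_sum (fun s _ => hβ0 s)
            (Finset.mem_filter.mpr ⟨hpsplit, hℓright⟩)
        simp only [γ, ge_iff_le]
        linarith
      · -- L right at p, ℓ left at p : use α
        have hpsplit : p ∈ t.splitsF := aux_prefix_split t ℓ hℓ p true hpℓ
        have hLright : L ∈ t.rightLeaves p := Finset.mem_filter.mpr ⟨hL, hpL⟩
        have hℓleft : ℓ ∈ t.leftLeaves p := Finset.mem_filter.mpr ⟨hℓ, hpℓ⟩
        have hαp : r ℓ - r L ≤ αd p := by
          simp only [αd, if_pos hLright]
          exact (Finset.le_fold_max _).mpr (Or.inr ⟨ℓ, hℓleft, le_rfl⟩)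
        have hsum : αd p ≤ ∑ s ∈ t.splitsF.filter (fun s => ℓ ∈ t.leftLeaves s), αd s :=
          Finset.single_le_sum (fun s _ => hα0 s)
            (Finset.mem_filter.mpr ⟨hpsplit, hℓleft⟩)
        simp only [γ, ge_iff_le]
        linarith
  · -- objective
    have h1 : ∀ s ∈ t.splitsF, αd s * xOf x (t.label s) = 0 := by
      intro s _
      simp only [αd]
      split
      · next h =>
        obtain ⟨a, ha, hxa⟩ :=
          aux_reach_label t x s false (Finset.mem_filter.mp h).2
        rw [ha]
        simp [xOf, hxa]
      · simp
    have h2 : ∀ s ∈ t.splitsF, βd s * (1 - xOf x (t.label s)) = 0 := by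
      intro s _
      simp only [βd]
      split
      · next h =>
        obtain ⟨a, ha, hxa⟩ :=
          aux_reach_label t x s true (Finset.mem_filter.mp h).2
        rw [ha]
        simp [xOf, hxa]
      · simp
    rw [Finset.sum_eq_zero h1, Finset.sum_eq_zero h2]
    simp [γ]
end

section
/- In the pairwise independent branching MIO: variables λ ∈ ℝ^J with Σ_{j∈J} λ_j = 1, λ ≥ 0, binary z₁,…,z_t ∈ {0,1}, and constraints Σ_{j∈L_m} λ_j ≤ z_m and Σ_{j∈R_m} λ_j ≤ 1 − z_m for m = 1,…,t, the set of feasible λ is exactly ∩_{m=1}^t (Q(J∖L_m) ∪ Q(J∖R_m)), where Q(S) = {λ ∈ Δ^J : λ_j = 0 for j ∉ S}; that is, λ is feasible for some binary z if and only if for each m, either λ_j = 0 for all j ∈ L_m or λ_j = 0 for all j ∈ R_m. -/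
/-- Pairwise independent branching scheme: for `λ` in the unit simplex over a finite ground
set `J`, there exist binary `z₁, …, z_T` with `∑_{j∈L_m} λ_j ≤ z_m` and
`∑_{j∈R_m} λ_j ≤ 1 - z_m` for all `m` if and only if for each `m`, either `λ` vanishes on
`L_m` or `λ` vanishes on `R_m`; i.e. the feasible `λ` are exactly
`∩_m (Q(J∖L_m) ∪ Q(J∖R_m))`. -/
theorem pairwise_independent_branching_feasible_iff
    {J : Type} [Fintype J] (T : ℕ) (L R : Fin T → Finset J)
    (lam : J → ℝ) (hnn : ∀ j, 0 ≤ lam j) (hsum : ∑ j, lam j = 1) :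
    (∃ z : Fin T → Bool, ∀ m,
        (∑ j ∈ L m, lam j ≤ (if z m then (1:ℝ) else 0)) ∧
        (∑ j ∈ R m, lam j ≤ 1 - (if z m then (1:ℝ) else 0))) ↔
    (∀ m, (∀ j ∈ L m, lam j = 0) ∨ (∀ j ∈ R m, lam j = 0)) := by
  have hle1 : ∀ S : Finset J, ∑ j ∈ S, lam j ≤ 1 := by
    intro S
    rw [← hsum]
    exact Finset.sum_le_sum_of_subset_of_nonneg (Finset.subset_univ S)
      (fun j _ _ => hnn j)
  have hzero : ∀ S : Finset J, ∑ j ∈ S, lam j ≤ 0 → ∀ j ∈ S, lam j = 0 := by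
    intro S hS j hj
    have := Finset.sum_eq_zero_iff_of_nonneg (fun j _ => hnn j) |>.mp
      (le_antisymm hS (Finset.sum_nonneg fun j _ => hnn j))
    exact this j hj
  constructor
  · rintro ⟨z, hz⟩ m
    rcases (hz m) with ⟨hL, hR⟩
    cases hzm : z m
    · left; exact hzero _ (by simpa [hzm] using hL)
    · right; exact hzero _ (by simpa [hzm] using hR)
  · intro h
    refine ⟨fun m => decide (¬ ∀ j ∈ L m, lam j = 0), fun m => ?_⟩
    by_cases hL : ∀ j ∈ L m, lam j = 0
    · have hd : decide (¬ ∀ j ∈ L m, lam j = 0) = false := by simpa using hL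
      beta_reduce
      rw [hd]
      rw [if_neg (by simp)]
      constructor
      · exact le_of_eq (Finset.sum_eq_zero hL)
      · simpa using hle1 (R m)
    · have hR : ∀ j ∈ R m, lam j = 0 := (h m).resolve_left hL
      have hd : decide (¬ ∀ j ∈ L m, lam j = 0) = true := by simpa using hL
      beta_reduce
      rw [hd]
      rw [if_pos rfl]
      constructor
      · exact hle1 (L m)
      · simp [Finset.sum_eq_zero hR]
end

section
/- For a purchase decision tree satisfying Assumption 1 and any leaf ℓ, the singleton {ℓ} equals the intersection over products i ∈ I(ℓ) of (leaves ∖ R_i), over products i ∈ E(ℓ) of (leaves ∖ L_i), and over all other products i of (leaves ∖ L_i), where L_i = ∪_{s: v(s)=i} left(s), R_i = ∪_{s: v(s)=i} right(s), I(ℓ) = {i : ℓ ∈ L_i}, and E(ℓ) = {i : ℓ ∈ R_i}. -/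
namespace BTree

variable {α : Type} [DecidableEq α]

/-- `L_i`: the union of `left(s)` over splits `s` labeled with product `i`. -/
def leftP (t : BTree α) (i : α) : Finset (List Bool) :=
  (t.splitsF.filter (fun s => t.label s = some i)).biUnion (fun s => t.leftLeaves s)

/-- `R_i`: the union of `right(s)` over splits `s` labeled with product `i`. -/
def rightP (t : BTree α) (i : α) : Finset (List Bool) :=
  (t.splitsF.filter (fun s => t.label s = some i)).biUnion (fun s => t.rightLeaves s)

lemma mem_leftP_iff (t : BTree α) (i : α) (ℓ : List Bool) (hℓ : ℓ ∈ t.leavesF) :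
    ℓ ∈ t.leftP i ↔ ∃ s ∈ t.splitsF, t.label s = some i ∧ s ++ [true] <+: ℓ := by
  simp only [leftP, leftLeaves, Finset.mem_biUnion, Finset.mem_filter]
  constructor
  · rintro ⟨s, ⟨hs, hlab⟩, _, hp⟩; exact ⟨s, hs, hlab, hp⟩
  · rintro ⟨s, hs, hlab, hp⟩; exact ⟨s, ⟨hs, hlab⟩, hℓ, hp⟩

lemma mem_rightP_iff (t : BTree α) (i : α) (ℓ : List Bool) (hℓ : ℓ ∈ t.leavesF) :
    ℓ ∈ t.rightP i ↔ ∃ s ∈ t.splitsF, t.label s = some i ∧ s ++ [false] <+: ℓ := by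
  simp only [rightP, rightLeaves, Finset.mem_biUnion, Finset.mem_filter]
  constructor
  · rintro ⟨s, ⟨hs, hlab⟩, _, hp⟩; exact ⟨s, hs, hlab, hp⟩
  · rintro ⟨s, hs, hlab, hp⟩; exact ⟨s, ⟨hs, hlab⟩, hℓ, hp⟩

lemma label_isSome_of_mem_splits : ∀ (t : BTree α) (s : List Bool),
    s ∈ t.splitsF → ∃ a, t.label s = some a := by
  intro t
  induction t with
  | leaf => intro s hs; simp [splitsF] at hs
  | node a l r ihl ihr =>
    intro s hs
    simp only [splitsF, Finset.mem_insert, Finset.mem_union, Finset.mem_image] at hs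
    rcases hs with rfl | ⟨p, hp, rfl⟩ | ⟨p, hp, rfl⟩
    · exact ⟨a, rfl⟩
    · exact ihl p hp
    · exact ihr p hp

lemma diverge : ∀ (t : BTree α) (ℓ ℓ' : List Bool),
    ℓ ∈ t.leavesF → ℓ' ∈ t.leavesF → ℓ ≠ ℓ' →
    ∃ s ∈ t.splitsF, ∃ b, s ++ [b] <+: ℓ ∧ s ++ [!b] <+: ℓ' := by
  intro t
  induction t with
  | leaf =>
    intro ℓ ℓ' hℓ hℓ' hne
    simp [leavesF] at hℓ hℓ'; exact absurd (hℓ.trans hℓ'.symm) hne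
  | node a l r ihl ihr =>
    intro ℓ ℓ' hℓ hℓ' hne
    simp only [leavesF, Finset.mem_union, Finset.mem_image] at hℓ hℓ'
    have hsplit : ∀ s ∈ l.splitsF, true :: s ∈ (BTree.node a l r).splitsF := by
      intro s hs
      simp only [splitsF, Finset.mem_insert, Finset.mem_union, Finset.mem_image]
      exact .inr (.inl ⟨s, hs, rfl⟩)
    have hsplit' : ∀ s ∈ r.splitsF, false :: s ∈ (BTree.node a l r).splitsF := by
      intro s hs
      simp only [splitsF, Finset.mem_insert, Finset.mem_union, Finset.mem_image]
      exact .inr (.inr ⟨s, hs, rfl⟩)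
    have hnil : ([] : List Bool) ∈ (BTree.node a l r).splitsF := by
      simp [splitsF]
    rcases hℓ with ⟨p, hp, rfl⟩ | ⟨p, hp, rfl⟩ <;>
      rcases hℓ' with ⟨q, hq, rfl⟩ | ⟨q, hq, rfl⟩
    · have hpq : p ≠ q := fun h => hne (by rw [h])
      obtain ⟨s, hs, b, h1, h2⟩ := ihl p q hp hq hpq
      exact ⟨true :: s, hsplit s hs, b, by simpa using h1, by simpa using h2⟩
    · exact ⟨[], hnil, true, by simp, by simp⟩
    · exact ⟨[], hnil, false, by simp, by simp⟩
    · have hpq : p ≠ q := fun h => hne (by rw [h])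
      obtain ⟨s, hs, b, h1, h2⟩ := ihr p q hp hq hpq
      exact ⟨false :: s, hsplit' s hs, b, by simpa using h1, by simpa using h2⟩

end BTree

/-- For a tree satisfying Assumption 1 and a leaf `ℓ`, the singleton `{ℓ}` equals the
intersection of `leaves ∖ R_i` over `i ∈ I(ℓ) = {i : ℓ ∈ L_i}`, of `leaves ∖ L_i` over
`i ∈ E(ℓ) = {i : ℓ ∈ R_i}`, and of `leaves ∖ L_i` over all other products `i`.  Stated
pointwise: a leaf `ℓ'` equals `ℓ` iff it avoids all those sets. -/
theorem singleton_leaf_eq_inter {α : Type} [DecidableEq α] (t : BTree α)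
    (hA1 : ∀ s ∈ t.splitsF, ∀ s' ∈ t.splitsF, s <+: s' → s ≠ s' → t.label s ≠ t.label s')
    (ℓ : List Bool) (hℓ : ℓ ∈ t.leavesF) :
    ∀ ℓ' ∈ t.leavesF,
      (ℓ' = ℓ ↔
        ((∀ i, ℓ ∈ t.leftP i → ℓ' ∉ t.rightP i) ∧
         (∀ i, ℓ ∈ t.rightP i → ℓ' ∉ t.leftP i) ∧
         (∀ i, ℓ ∉ t.leftP i → ℓ ∉ t.rightP i → ℓ' ∉ t.leftP i))) := by
  intro ℓ' hℓ'
  have key : ∀ i, ℓ ∈ t.leftP i → ℓ ∈ t.rightP i → False := by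
    intro i hL hR
    obtain ⟨s, hs, hlab, hp⟩ := (t.mem_leftP_iff i ℓ hℓ).1 hL
    obtain ⟨s', hs', hlab', hp'⟩ := (t.mem_rightP_iff i ℓ hℓ).1 hR
    by_cases heq : s = s'
    · subst heq
      rcases List.prefix_or_prefix_of_prefix hp hp' with h | h <;> simp at h
    · have hsp : s <+: ℓ := (List.prefix_append s [true]).trans hp
      have hsp' : s' <+: ℓ := (List.prefix_append s' [false]).trans hp'
      rcases List.prefix_or_prefix_of_prefix hsp hsp' with h | h
      · exact hA1 s hs s' hs' h heq (hlab.trans hlab'.symm)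
      · exact hA1 s' hs' s hs h (Ne.symm heq) (hlab'.trans hlab.symm)
  constructor
  · rintro rfl
    refine ⟨fun i hL hR => key i hL hR, fun i hR hL => key i hL hR, fun i h1 _ h2 => h1 h2⟩
  · rintro ⟨c1, c2, _⟩
    by_contra hne
    obtain ⟨s, hs, b, h1, h2⟩ := BTree.diverge t ℓ ℓ' hℓ hℓ' (fun h => hne h.symm)
    obtain ⟨i, hlab⟩ := BTree.label_isSome_of_mem_splits t s hs
    cases b with
    | true =>
      have hL : ℓ ∈ t.leftP i := (t.mem_leftP_iff i ℓ hℓ).2 ⟨s, hs, hlab, h1⟩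
      have hR : ℓ' ∈ t.rightP i := (t.mem_rightP_iff i ℓ' hℓ').2 ⟨s, hs, hlab, by simpa using h2⟩
      exact c1 i hL hR
    | false =>
      have hR : ℓ ∈ t.rightP i := (t.mem_rightP_iff i ℓ hℓ).2 ⟨s, hs, hlab, h1⟩
      have hL : ℓ' ∈ t.leftP i := (t.mem_leftP_iff i ℓ' hℓ').2 ⟨s, hs, hlab, by simpa using h2⟩
      exact c2 i hR hL
end
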